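/- arXiv:math/0410371 — 4 statements merged into one kernel-verified Lean document; each statement's English description precedes it below -/
import Mathlib

section
/- Let $d \ge 1$ and let $A \subseteq \mathbb{Z}^d \times \{0,1,2,\dots\} \subseteq \mathbb{Z}^{d+1}$ be a finite, non-empty, $\mathcal{L}$-connected set. Then $|\partial_{ext}A| \le 6\,|\partial_{ext}^{+}A|$. -/
/-- Two points of `ℤ^D` are `ℒ`-adjacent if they are distinct and within `ℓ^∞` distance 1. -/
def LAdj {D : ℕ} (v w : Fin D → ℤ) : Prop := v ≠ w ∧ ∀ i, |v i - w i| ≤ 1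

/-- Two points of `ℤ^D` are nearest-neighbor adjacent if they are at `ℓ^1` distance 1. -/
def NNAdj {D : ℕ} (v w : Fin D → ℤ) : Prop := (∑ i, |v i - w i|) = 1

/-- A set `A` is connected for the adjacency relation `adj`: any two of its points are joined
by a path staying inside `A`. -/
def ConnectedIn {α : Type*} (adj : α → α → Prop) (A : Set α) : Prop :=
  ∀ x ∈ A, ∀ y ∈ A, Relation.ReflTransGen (fun a b => a ∈ A ∧ b ∈ A ∧ adj a b) x y

/-- A sequence eventually leaves every finite set. -/
def EscapesToInfinity {α : Type*} (γ : ℕ → α) : Prop :=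
  ∀ F : Set α, F.Finite → ∃ N, ∀ n, N ≤ n → γ n ∉ F

/-- A nearest-neighbor path to infinity. -/
def NNPathToInfinity {D : ℕ} (γ : ℕ → Fin D → ℤ) : Prop :=
  (∀ n, NNAdj (γ n) (γ (n + 1))) ∧ EscapesToInfinity γ

/-- The exterior boundary of `A`: points outside `A`, `ℒ`-adjacent to `A`, from which a
nearest-neighbor path to infinity avoiding `A` exists. -/
def extBdry {D : ℕ} (A : Set (Fin D → ℤ)) : Set (Fin D → ℤ) :=
  {v | v ∉ A ∧ (∃ w ∈ A, LAdj v w) ∧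
    ∃ γ : ℕ → Fin D → ℤ, γ 0 = v ∧ NNPathToInfinity γ ∧ ∀ n, γ n ∉ A}

/-- `S` separates `A` from infinity: `S` is disjoint from `A` and every nearest-neighbor path
from `A` to infinity meets `S`. -/
def Separates {D : ℕ} (S A : Set (Fin D → ℤ)) : Prop :=
  S ∩ A = ∅ ∧ ∀ γ : ℕ → Fin D → ℤ, γ 0 ∈ A → NNPathToInfinity γ → ∃ n, γ n ∈ S

/-- `(w, v)` is a `𝒟`-edge: the last coordinate increases by 1 and the first `d` coordinates
change by at most 1 each. -/
def DEdge {d : ℕ} (w v : Fin (d + 1) → ℤ) : Prop :=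
  v (Fin.last d) = w (Fin.last d) + 1 ∧ ∀ i : Fin d, |v i.castSucc - w i.castSucc| ≤ 1

/-- The part `∂⁺_ext A` of the exterior boundary reachable from `A` by a `𝒟`-edge. -/
def extBdryPlus {d : ℕ} (A : Set (Fin (d + 1) → ℤ)) : Set (Fin (d + 1) → ℤ) :=
  {v ∈ extBdry A | ∃ w ∈ A, DEdge w v}

/-!
Send each point `v` of `∂_ext A ∖ ∂⁺_ext A` to the lowest point of `∂⁺_ext A` in the column above
it. To find points of `∂⁺_ext A` above `v ∈ ∂_ext A`, take a height `m ≥ 2` at which `raise v m`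
escapes and is not in `A`. If `A` meets the column segment from `v` to `raise v m`, the point just
above its highest point there is the head of a vertical `𝒟`-edge and escapes through `raise v m`.
Otherwise the `ℒ`-neighbour `w ∈ A` of `v` lies at relative height `-1`, `0` or `1`, so it is the
tail of a `𝒟`-edge ending at `raise v k` for some `k ≤ 2`. Applied with `raise v m` far above `A`,
this shows that the map is defined; applied with `raise v m ∈ ∂_ext A ∖ ∂⁺_ext A`, it shows that two
points of a fibre are at vertical distance at most `1`, so the parity of the height separates them.
Hence `|∂_ext A| ≤ 3 |∂⁺_ext A|`.
-/

open Filter Set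

def Escapes {D : ℕ} (A : Set (Fin D → ℤ)) (p : Fin D → ℤ) : Prop :=
  ∃ γ : ℕ → Fin D → ℤ, γ 0 = p ∧ NNPathToInfinity γ ∧ ∀ n, γ n ∉ A

section General

variable {D : ℕ} {A : Set (Fin D → ℤ)} {p q : Fin D → ℤ}

lemma Escapes.of_nnAdj (hq : Escapes A q) (hpq : NNAdj p q) (hp : p ∉ A) : Escapes A p := by
  obtain ⟨γ, rfl, ⟨hstep, hinf⟩, hγA⟩ := hq
  refine ⟨fun | 0 => p | n + 1 => γ n, rfl, ⟨?_, fun F hF => ?_⟩, ?_⟩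
  · rintro (_ | n)
    exacts [hpq, hstep n]
  · obtain ⟨N, hN⟩ := hinf F hF
    refine ⟨N + 1, fun n hn => ?_⟩
    obtain ⟨n, rfl⟩ : ∃ k, n = k + 1 := ⟨n - 1, by omega⟩
    exact hN n (by omega)
  · rintro (_ | n)
    exacts [hp, hγA n]

lemma Set.Finite.setOf_exists_lAdj (hA : A.Finite) : {v | ∃ w ∈ A, LAdj v w}.Finite := by
  refine (hA.biUnion fun w _ => Set.Finite.pi' fun i => finite_Icc (w i - 1) (w i + 1)).subset ?_
  rintro v ⟨w, hw, -, hvw⟩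
  refine mem_biUnion hw fun i => ?_
  have := abs_le.mp (hvw i)
  exact ⟨by omega, by omega⟩

end General

variable {d : ℕ}

def raise (v : Fin (d + 1) → ℤ) (k : ℕ) : Fin (d + 1) → ℤ :=
  Function.update v (Fin.last d) (v (Fin.last d) + k)

section Raise

variable (v : Fin (d + 1) → ℤ) (k : ℕ)

@[simp] lemma raise_last : raise v k (Fin.last d) = v (Fin.last d) + k := by
  simp [raise]

@[simp] lemma raise_castSucc (i : Fin d) : raise v k i.castSucc = v i.castSucc := by
  simp [raise, (Fin.castSucc_lt_last i).ne]

@[simp] lemma raise_zero : raise v 0 = v := by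
  simp [raise]

lemma raise_raise (l : ℕ) : raise (raise v k) l = raise v (k + l) := by
  funext i
  induction i using Fin.lastCases <;> simp [add_assoc]

lemma nnAdj_raise_succ : NNAdj (raise v k) (raise v (k + 1)) := by
  simp [NNAdj, Fin.sum_univ_castSucc]

lemma dEdge_raise_succ : DEdge (raise v k) (raise v (k + 1)) := by
  simp [DEdge, add_assoc]

end Raise

lemma eq_raise_sub_of_raise_eq {v w : Fin (d + 1) → ℤ} {k l : ℕ} (h : raise v k = raise w l)
    (hlk : l ≤ k) : w = raise v (k - l) := by
  funext i
  induction i using Fin.lastCases with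
  | last => have := congrFun h (Fin.last d); simp at this ⊢; omega
  | cast i => simpa using (congrFun h i.castSucc).symm

section Column

variable {A : Set (Fin (d + 1) → ℤ)} {v w : Fin (d + 1) → ℤ}

lemma DEdge.lAdj (h : DEdge w v) : LAdj v w := by
  refine ⟨fun hvw => by simpa [hvw] using h.1, fun i => ?_⟩
  induction i using Fin.lastCases with
  | last => simp [h.1]
  | cast i => exact h.2 i

lemma LAdj.exists_dEdge_raise (h : LAdj v w) : ∃ k ≤ 2, DEdge w (raise v k) := by
  have := abs_le.mp (h.2 (Fin.last d))
  refine ⟨(w (Fin.last d) - v (Fin.last d) + 1).toNat, by omega, ?_, fun i => ?_⟩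
  · simp only [raise_last]; omega
  · simpa [abs_sub_comm] using h.2 i.castSucc

lemma eventually_raise_notMem (hA : A.Finite) (v : Fin (d + 1) → ℤ) :
    ∀ᶠ k in atTop, raise v k ∉ A := by
  have hinj : Function.Injective (raise v) := fun k l h => by
    simpa using congrFun h (Fin.last d)
  exact Nat.cofinite_eq_atTop ▸ hinj.tendsto_cofinite.eventually hA.eventually_cofinite_notMem

lemma escapes_of_forall_raise_notMem (h : ∀ k, raise v k ∉ A) : Escapes A v := by
  refine ⟨raise v, raise_zero v, ⟨nnAdj_raise_succ v, fun F hF => ?_⟩, h⟩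
  exact eventually_atTop.mp (eventually_raise_notMem hF v)

lemma Escapes.raise_of_segment {j m : ℕ} (hesc : Escapes A (raise v m)) (hjm : j ≤ m)
    (hseg : ∀ i, j ≤ i → i ≤ m → raise v i ∉ A) : Escapes A (raise v j) := by
  obtain ⟨n, rfl⟩ := Nat.exists_eq_add_of_le hjm
  induction n generalizing j with
  | zero => simpa using hesc
  | succ n ih =>
    have hnext := ih (by rwa [add_right_comm, add_assoc]) (by omega)
      fun i hi him => hseg i (by omega) (by omega)
    exact hnext.of_nnAdj (nnAdj_raise_succ v j) (hseg j le_rfl (by omega))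

lemma mem_extBdryPlus_of_dEdge {u : Fin (d + 1) → ℤ} (hw : w ∈ A) (hwu : DEdge w u) (hu : u ∉ A)
    (hesc : Escapes A u) : u ∈ extBdryPlus A :=
  ⟨⟨hu, ⟨w, hw, hwu.lAdj⟩, hesc⟩, w, hw, hwu⟩

lemma exists_le_raise_mem_extBdryPlus {m : ℕ} (hv : v ∈ extBdry A) (hm : 2 ≤ m)
    (hesc : Escapes A (raise v m)) (hmA : raise v m ∉ A) :
    ∃ j ≤ m, raise v j ∈ extBdryPlus A := by
  classical
  by_cases hcol : ∃ i ≤ m, raise v i ∈ A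
  · obtain ⟨i, him, hi⟩ := hcol
    set L := Nat.findGreatest (fun i => raise v i ∈ A) m
    have hL : raise v L ∈ A := Nat.findGreatest_spec (P := fun i => raise v i ∈ A) him hi
    have hLm : L < m := (Nat.findGreatest_le m).lt_of_ne fun h => hmA (h ▸ hL)
    have hseg : ∀ i, L + 1 ≤ i → i ≤ m → raise v i ∉ A := fun i hi him =>
      Nat.findGreatest_is_greatest (P := fun i => raise v i ∈ A) (by omega) him
    exact ⟨L + 1, hLm, mem_extBdryPlus_of_dEdge hL (dEdge_raise_succ v L)
      (hseg _ le_rfl hLm) (hesc.raise_of_segment hLm hseg)⟩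
  · push Not at hcol
    obtain ⟨w, hw, hvw⟩ := hv.2.1
    obtain ⟨k, hk, hwk⟩ := hvw.exists_dEdge_raise
    exact ⟨k, by omega, mem_extBdryPlus_of_dEdge hw hwk (hcol k (by omega))
      (hesc.raise_of_segment (by omega) fun i _ him => hcol i him)⟩

lemma exists_raise_mem_extBdryPlus (hA : A.Finite) (hv : v ∈ extBdry A) :
    ∃ j, raise v j ∈ extBdryPlus A := by
  obtain ⟨N, hN⟩ := eventually_atTop.mp (eventually_raise_notMem hA v)
  have hesc : Escapes A (raise v (max N 2)) := escapes_of_forall_raise_notMem fun k => by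
    rw [raise_raise]
    exact hN _ (by omega)
  obtain ⟨j, -, hj⟩ :=
    exists_le_raise_mem_extBdryPlus hv (le_max_right N 2) hesc (hN _ (le_max_left N 2))
  exact ⟨j, hj⟩

lemma exists_lt_raise_mem_extBdryPlus {m : ℕ} (hv : v ∈ extBdry A)
    (hvm : raise v m ∈ extBdry A \ extBdryPlus A) (hm : 2 ≤ m) :
    ∃ j < m, raise v j ∈ extBdryPlus A := by
  obtain ⟨j, hjm, hj⟩ := exists_le_raise_mem_extBdryPlus hv hm hvm.1.2.2 hvm.1.1
  exact ⟨j, hjm.lt_of_ne fun h => hvm.2 (h ▸ hj), hj⟩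

end Column

lemma ncard_le_two_mul_ncard_of_raise {S P : Set (Fin (d + 1) → ℤ)} (hP : P.Finite)
    (hup : ∀ v ∈ S, ∃ m, raise v m ∈ P)
    (hgap : ∀ v ∈ S, ∀ m, 2 ≤ m → raise v m ∈ S → ∃ j < m, raise v j ∈ P) :
    S.ncard ≤ 2 * P.ncard := by
  classical
  have hlowest : ∀ v ∈ S, ∃ m, raise v m ∈ P ∧ ∀ j < m, raise v j ∉ P := fun v hv =>
    ⟨Nat.find (hup v hv), Nat.find_spec (hup v hv), fun _ => Nat.find_min (hup v hv)⟩
  choose! μ hμ hμmin using hlowest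
  have hfibre : ∀ x ∈ S, ∀ y ∈ S, raise x (μ x) = raise y (μ y) → μ y ≤ μ x →
      μ x % 2 = μ y % 2 → x = y := by
    intro x hx y hy hxy hle hpar
    have hy' : y = raise x (μ x - μ y) := eq_raise_sub_of_raise_eq hxy hle
    obtain h | h : μ x - μ y = 0 ∨ 2 ≤ μ x - μ y := by omega
    · rw [hy', h, raise_zero]
    · obtain ⟨j, hj, hjP⟩ := hgap x hx _ h (hy' ▸ hy)
      exact absurd hjP (hμmin x hx j (by omega))
  have hinj : InjOn (fun v => (raise v (μ v), μ v % 2)) S := by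
    rintro x hx y hy hxy
    simp only [Prod.mk.injEq] at hxy
    rcases le_total (μ y) (μ x) with h | h
    · exact hfibre x hx y hy hxy.1 h hxy.2
    · exact (hfibre y hy x hx hxy.1.symm h hxy.2.symm).symm
  calc S.ncard ≤ (P ×ˢ Iio 2).ncard :=
        ncard_le_ncard_of_injOn _ (fun v hv => ⟨hμ v hv, Nat.mod_lt _ two_pos⟩) hinj
          (hP.prod (finite_Iio 2))
    _ = 2 * P.ncard := by rw [ncard_prod, ncard_Iio_nat, mul_comm]

theorem card_extBdry_le_six_card_extBdryPlus_general (d : ℕ)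
    (A : Set (Fin (d + 1) → ℤ)) (hfin : A.Finite) :
    (extBdry A).ncard ≤ 6 * (extBdryPlus A).ncard := by
  have hP : (extBdryPlus A).Finite := hfin.setOf_exists_lAdj.subset fun v hv => hv.1.2.1
  have hrest : (extBdry A \ extBdryPlus A).ncard ≤ 2 * (extBdryPlus A).ncard :=
    ncard_le_two_mul_ncard_of_raise hP (fun v hv => exists_raise_mem_extBdryPlus hfin hv.1)
      fun v hv _ hm hvm => exists_lt_raise_mem_extBdryPlus hv.1 hvm hm
  have hsplit := ncard_le_ncard_sdiff_add_ncard (extBdry A) (extBdryPlus A) hP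
  omega

/-- Lemma 5, second part: for a finite nonempty `ℒ`-connected
`A ⊆ ℤ^d × {0,1,2,…}`, one has `|∂_ext A| ≤ 6 |∂⁺_ext A|`. -/
theorem card_extBdry_le_six_card_extBdryPlus (d : ℕ) (hd : 1 ≤ d)
    (A : Set (Fin (d + 1) → ℤ)) (hfin : A.Finite) (hne : A.Nonempty)
    (hhalf : ∀ v ∈ A, 0 ≤ v (Fin.last d))
    (hconn : ConnectedIn LAdj A) :
    (extBdry A).ncard ≤ 6 * (extBdryPlus A).ncard :=
  card_extBdry_le_six_card_extBdryPlus_general d A hfin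
end

section
/- Let $d \ge 1$ and let $A \subseteq \mathbb{Z}^d \times \{0,1,2,\dots\} \subseteq \mathbb{Z}^{d+1}$ be any finite set. Then $|\partial_{ext}^{*}A| \le |\partial_{ext}^{+}A|$. -/
/-- The last standard basis vector `e_{d+1}` of `ℤ^{d+1}`. -/
def eLast (d : ℕ) : Fin (d + 1) → ℤ := fun i => if i = Fin.last d then 1 else 0

/-- The part `∂*_ext A` of the exterior boundary lying directly below a point of `A`. -/
def extBdryStar {d : ℕ} (A : Set (Fin (d + 1) → ℤ)) : Set (Fin (d + 1) → ℤ) :=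
  {v ∈ extBdry A | v + eLast d ∈ A}

section EBAux

variable {d : ℕ}

private lemma eLast_apply (i : Fin (d+1)) : eLast d i = if i = Fin.last d then 1 else 0 := rfl

private lemma eLast_last : eLast d (Fin.last d) = 1 := if_pos rfl

private lemma eLast_castSucc (i : Fin d) : eLast d (i.castSucc) = 0 :=
  if_neg (Fin.castSucc_lt_last i).ne

private lemma eLast_nonneg (i : Fin (d+1)) : 0 ≤ eLast d i := by
  rw [eLast_apply]; split <;> norm_num

private lemma col_apply (v : Fin (d+1) → ℤ) (k : ℤ) (i : Fin (d+1)) :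
    (v + k • eLast d) i = v i + k * eLast d i := rfl

private lemma col_last (v : Fin (d+1) → ℤ) (k : ℤ) :
    (v + k • eLast d) (Fin.last d) = v (Fin.last d) + k := by
  rw [col_apply, eLast_last, mul_one]

private lemma col_col (v : Fin (d+1) → ℤ) (k l : ℤ) :
    (v + k • eLast d) + l • eLast d = v + (k + l) • eLast d := by
  rw [add_smul]; abel

private lemma sum_eLast : (∑ i, eLast d i) = 1 := by
  simp [eLast_apply]

private lemma nnadj_up (v : Fin (d+1) → ℤ) (k : ℤ) :
    NNAdj (v + k • eLast d) (v + (k+1) • eLast d) := by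
  unfold NNAdj
  have h : ∀ i, |(v + k • eLast d) i - (v + (k+1) • eLast d) i| = eLast d i := by
    intro i
    rw [col_apply, col_apply]
    have h2 : v i + k * eLast d i - (v i + (k+1) * eLast d i) = -(eLast d i) := by ring
    rw [h2, abs_neg, abs_of_nonneg (eLast_nonneg i)]
  simp_rw [h]
  exact sum_eLast

private lemma ladj_vert (v : Fin (d+1) → ℤ) (k l : ℤ) (h : k ≠ l) (h2 : |k - l| ≤ 1) :
    LAdj (v + k • eLast d) (v + l • eLast d) := by
  constructor
  · intro he
    have h3 := congrFun he (Fin.last d)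
    rw [col_last, col_last] at h3
    omega
  · intro i
    rw [col_apply, col_apply, eLast_apply]
    split_ifs with hi
    · have h4 : v i + k * 1 - (v i + l * 1) = k - l := by ring
      rw [h4]; exact h2
    · simp

private lemma dedge_up (v : Fin (d+1) → ℤ) (a : ℤ) :
    DEdge (v + (a-1) • eLast d) (v + a • eLast d) := by
  constructor
  · rw [col_last, col_last]; ring
  · intro i
    rw [col_apply, col_apply, eLast_castSucc]
    simp

private def colSet (A : Set (Fin (d+1) → ℤ)) (v : Fin (d+1) → ℤ) : Set ℤ :=
  {k | v + k • eLast d ∈ A}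

private lemma colSet_finite {A : Set (Fin (d+1) → ℤ)} (hA : A.Finite) (v : Fin (d+1) → ℤ) :
    (colSet A v).Finite := by
  have h : colSet A v = (fun k : ℤ => v + k • eLast d) ⁻¹' A := rfl
  rw [h]
  apply Set.Finite.preimage _ hA
  intro a _ b _ hab
  have h2 := congrFun hab (Fin.last d)
  simp only [col_last] at h2
  omega

private lemma colSet_shift (A : Set (Fin (d+1) → ℤ)) (v : Fin (d+1) → ℤ) (r : ℤ) :
    colSet A (v + r • eLast d) = {k | k + r ∈ colSet A v} := by
  ext k
  simp only [colSet, Set.mem_setOf_eq, col_col]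
  rw [add_comm r k]

private lemma star_zero_one {A : Set (Fin (d+1) → ℤ)} {v : Fin (d+1) → ℤ}
    (hv : v ∈ extBdryStar A) : (0:ℤ) ∉ colSet A v ∧ (1:ℤ) ∈ colSet A v := by
  obtain ⟨⟨hvA, -, -⟩, htop⟩ := hv
  constructor
  · intro h
    apply hvA
    have h2 : v + (0:ℤ) • eLast d ∈ A := h
    rwa [zero_smul, add_zero] at h2
  · show v + (1:ℤ) • eLast d ∈ A
    rw [one_smul]
    exact htop

/-- spec of the chosen boundary point level `a` in the column of `v`. -/
private def ebSpec (T : Set ℤ) (a : ℤ) : Prop :=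
  a - 1 ∈ T ∧ ((a ≤ 0 ∧ ∀ s, a ≤ s → s ≤ 0 → s ∉ T) ∨
    (0 < a ∧ (∀ k ∈ T, k < a) ∧ (∀ k ∈ T, 0 ≤ k)))

private lemma ebSpec_unique {T : Set ℤ} (h1 : (1:ℤ) ∈ T) (h0 : (0:ℤ) ∉ T)
    {r a : ℤ} (h1' : 1 + r ∈ T) (h0' : r ∉ T)
    (hs : ebSpec T a) (hs' : ebSpec {k | k + r ∈ T} (a - r)) : r = 0 := by
  obtain ⟨hm, hc⟩ := hs
  obtain ⟨hm', hc'⟩ := hs'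
  simp only [Set.mem_setOf_eq] at hm' hc'
  rcases hc with ⟨ha, hz⟩ | ⟨ha, hlt, hnn⟩ <;>
    rcases hc' with ⟨ha', hz'⟩ | ⟨ha', hlt', hnn'⟩
  · by_contra hr
    rcases lt_trichotomy r 0 with h | h | h
    · exact hz (1 + r) (by omega) (by omega) h1'
    · exact hr h
    · exact hz' (1 - r) (by omega) (by omega)
        (by rw [show (1:ℤ) - r + r = 1 from by ring]; exact h1)
  · have h2 := hlt' (1 - r) (by rw [show (1:ℤ) - r + r = 1 from by ring]; exact h1)
    omega
  · have h2 := hlt (1 + r) h1'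
    omega
  · have k1 : (0:ℤ) ≤ 1 - r := hnn' (1 - r)
      (by rw [show (1:ℤ) - r + r = 1 from by ring]; exact h1)
    have k2 : (0:ℤ) ≤ 1 + r := hnn _ h1'
    have h3 : r = -1 ∨ r = 0 ∨ r = 1 := by omega
    rcases h3 with h | h | h
    · subst h
      rw [show (1:ℤ) + -1 = 0 from by ring] at h1'
      exact absurd h1' h0
    · exact h
    · subst h
      exact absurd h1 h0'

open Classical in
private noncomputable def fmap (A : Set (Fin (d+1) → ℤ)) (v : Fin (d+1) → ℤ) :
    Fin (d+1) → ℤ :=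
  if _ : ∃ k, k < 0 ∧ k ∈ colSet A v then
    v + (sSup {k | k < 0 ∧ k ∈ colSet A v} + 1) • eLast d
  else
    v + (sSup (colSet A v) + 1) • eLast d

private lemma escapes_up (v : Fin (d+1) → ℤ) (a : ℤ) :
    EscapesToInfinity (fun n : ℕ => v + (a + n) • eLast d) := by
  intro F hF
  obtain ⟨B, hB⟩ := (hF.image (fun x => x (Fin.last d))).bddAbove
  refine ⟨(B - v (Fin.last d) - a + 1).toNat, fun n hn hmem => ?_⟩
  have h1 : v (Fin.last d) + (a + n) ≤ B := by
    have := hB (Set.mem_image_of_mem (fun x => x (Fin.last d)) hmem)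
    simpa [col_last, eLast_last] using this
  have h2 : (B - v (Fin.last d) - a + 1 : ℤ) ≤ n := by
    exact_mod_cast Int.toNat_le.mp hn
  omega

private lemma case2_path (A : Set (Fin (d+1) → ℤ)) (v : Fin (d+1) → ℤ) (a : ℤ)
    (hzone : ∀ k : ℤ, a ≤ k → v + k • eLast d ∉ A) :
    ∃ γ, γ 0 = v + a • eLast d ∧ NNPathToInfinity γ ∧ ∀ n, γ n ∉ A := by
  refine ⟨fun n : ℕ => v + (a + n) • eLast d, by simp, ⟨?_, escapes_up v a⟩, ?_⟩
  · intro n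
    show NNAdj (v + (a + (n:ℤ)) • eLast d) (v + (a + ((n:ℕ)+1 : ℕ)) • eLast d)
    rw [show ((((n:ℕ)+1 : ℕ)) : ℤ) = (n : ℤ) + 1 from by push_cast; ring,
      show a + ((n:ℤ) + 1) = (a + (n:ℤ)) + 1 from by ring]
    exact nnadj_up v _
  · intro n
    exact hzone _ (by omega)

private lemma case1_path (A : Set (Fin (d+1) → ℤ)) (v : Fin (d+1) → ℤ) (a : ℤ)
    (ha : a ≤ 0)
    (hzone : ∀ s : ℤ, a ≤ s → s ≤ 0 → v + s • eLast d ∉ A)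
    (hv : ∃ γ, γ 0 = v ∧ NNPathToInfinity γ ∧ ∀ n, γ n ∉ A) :
    ∃ γ, γ 0 = v + a • eLast d ∧ NNPathToInfinity γ ∧ ∀ n, γ n ∉ A := by
  obtain ⟨γ, hγ0, ⟨hadj, hesc⟩, havoid⟩ := hv
  set s : ℕ := (-a).toNat with hs
  have hsa : (s : ℤ) = -a := Int.toNat_of_nonneg (by omega)
  refine ⟨fun n => if n < s then v + (a + n) • eLast d else γ (n - s), ?_, ⟨?_, ?_⟩, ?_⟩
  · by_cases h0 : 0 < s
    · simp [h0]
    · have hs0 : s = 0 := by omega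
      have ha0 : a = 0 := by omega
      simp [hs0, ha0, hγ0]
  · intro n
    by_cases hn1 : n + 1 < s
    · have hn : n < s := by omega
      simp only [if_pos hn, if_pos hn1]
      rw [show ((((n:ℕ)+1 : ℕ)) : ℤ) = (n : ℤ) + 1 from by push_cast; ring,
        show a + ((n:ℤ) + 1) = (a + (n:ℤ)) + 1 from by ring]
      exact nnadj_up v _
    · by_cases hn : n < s
      · have hns : n + 1 = s := by omega
        simp only [if_pos hn, if_neg hn1, show n + 1 - s = 0 from by omega, hγ0]
        have hval : a + (n : ℤ) = -1 := by omega
        rw [hval]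
        simpa using nnadj_up v (-1)
      · simp only [if_neg hn, if_neg (show ¬ n + 1 < s from by omega)]
        rw [show n + 1 - s = (n - s) + 1 from by omega]
        exact hadj _
  · intro F hF
    obtain ⟨N, hN⟩ := hesc F hF
    refine ⟨N + s, fun n hn => ?_⟩
    simp only [if_neg (show ¬ n < s from by omega)]
    exact hN _ (by omega)
  · intro n
    by_cases hn : n < s
    · simp only [if_pos hn]
      exact hzone _ (by omega) (by omega)
    · simp only [if_neg hn]
      exact havoid _

private lemma fmap_mem {A : Set (Fin (d+1) → ℤ)} (hfin : A.Finite)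
    {v : Fin (d+1) → ℤ} (hv : v ∈ extBdryStar A) :
    ∃ a : ℤ, fmap A v = v + a • eLast d ∧ ebSpec (colSet A v) a ∧
      fmap A v ∈ extBdryPlus A := by
  obtain ⟨h0, h1⟩ := star_zero_one hv
  obtain ⟨⟨hvA, hvadj, hvpath⟩, htop⟩ := hv
  have hTfin : (colSet A v).Finite := colSet_finite hfin v
  have hmain : ∃ a : ℤ, fmap A v = v + a • eLast d ∧ ebSpec (colSet A v) a := by
    unfold fmap
    split_ifs with h
    · set N := {k : ℤ | k < 0 ∧ k ∈ colSet A v} with hN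
      have hNfin : N.Finite := hTfin.subset (fun k hk => hk.2)
      have ht₀ : sSup N ∈ N := Set.Nonempty.csSup_mem h hNfin
      have hneg : sSup N < 0 := ht₀.1
      refine ⟨sSup N + 1, rfl, by simpa using ht₀.2, Or.inl ⟨by omega, ?_⟩⟩
      intro t ht1 ht2 htT
      rcases lt_or_ge t 0 with h3 | h3
      · have h4 : t ≤ sSup N := le_csSup hNfin.bddAbove (⟨h3, htT⟩ : t ∈ N)
        omega
      · have h5 : t = 0 := by omega
        rw [h5] at htT
        exact h0 htT
    · have hm : sSup (colSet A v) ∈ colSet A v := Set.Nonempty.csSup_mem ⟨1, h1⟩ hTfin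
      have hub : ∀ k ∈ colSet A v, k ≤ sSup (colSet A v) :=
        fun k hk => le_csSup hTfin.bddAbove hk
      push_neg at h
      refine ⟨sSup (colSet A v) + 1, rfl, by simpa using hm, Or.inr ⟨?_, ?_, ?_⟩⟩
      · have := hub 1 h1; omega
      · intro k hk; have := hub k hk; omega
      · intro k hk
        by_contra hneg
        exact h k (by omega) hk
  obtain ⟨a, hfa, hspec⟩ := hmain
  refine ⟨a, hfa, hspec, ?_⟩
  obtain ⟨hmem, hcase⟩ := hspec
  have hnotA : v + a • eLast d ∉ A := by
    rcases hcase with ⟨ha, hz⟩ | ⟨ha, hlt, -⟩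
    · exact hz a le_rfl ha
    · intro hA
      exact absurd (hlt a hA) (lt_irrefl a)
  have hpath : ∃ γ, γ 0 = v + a • eLast d ∧ NNPathToInfinity γ ∧ ∀ n, γ n ∉ A := by
    rcases hcase with ⟨ha, hz⟩ | ⟨ha, hlt, -⟩
    · exact case1_path A v a ha (fun t h2 h3 h4 => hz t h2 h3 h4) hvpath
    · exact case2_path A v a (fun k hk hA => absurd (hlt k hA) (not_lt.mpr hk))
  rw [hfa]
  exact ⟨⟨hnotA, ⟨v + (a-1) • eLast d, hmem, ladj_vert v a (a-1) (by omega) (by norm_num)⟩,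
    hpath⟩, v + (a-1) • eLast d, hmem, dedge_up v a⟩

private lemma extBdryPlus_finite {A : Set (Fin (d+1) → ℤ)} (hfin : A.Finite) :
    (extBdryPlus A).Finite := by
  have hsub : extBdryPlus A ⊆ ⋃ w ∈ A, Set.pi Set.univ (fun i => Set.Icc (w i - 1) (w i + 1)) := by
    rintro x ⟨-, w, hw, hlast, hcast⟩
    refine Set.mem_biUnion hw ?_
    intro i _
    induction i using Fin.lastCases with
    | last =>
      rw [hlast]
      constructor <;> omega
    | cast i =>
      have h2 := abs_le.mp (hcast i)
      constructor <;> omega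
  exact Set.Finite.subset
    (hfin.biUnion (fun w _ => Set.Finite.pi (fun i => Set.finite_Icc _ _))) hsub

end EBAux

/-- inequality (3.5): for any finite `A ⊆ ℤ^d × {0,1,2,…}`,
`|∂*_ext A| ≤ |∂⁺_ext A|`. -/
theorem card_extBdryStar_le_card_extBdryPlus (d : ℕ) (hd : 1 ≤ d)
    (A : Set (Fin (d + 1) → ℤ)) (hfin : A.Finite)
    (hhalf : ∀ v ∈ A, 0 ≤ v (Fin.last d)) :
    (extBdryStar A).ncard ≤ (extBdryPlus A).ncard := by
  classical
  have key : ∀ v ∈ extBdryStar A, ∃ a : ℤ, fmap A v = v + a • eLast d ∧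
      ebSpec (colSet A v) a ∧ fmap A v ∈ extBdryPlus A := fun v hv => fmap_mem hfin hv
  have hmaps : Set.MapsTo (fmap A) (extBdryStar A) (extBdryPlus A) := by
    intro v hv
    obtain ⟨a, -, -, hm⟩ := key v hv
    exact hm
  have hinj : Set.InjOn (fmap A) (extBdryStar A) := by
    intro v hv v' hv' he
    obtain ⟨a, hfa, hspec, -⟩ := key v hv
    obtain ⟨a', hfa', hspec', -⟩ := key v' hv'
    rw [hfa, hfa'] at he
    have hv'eq : v' = v + (a - a') • eLast d := by
      have h2 : v' + (a' + -a') • eLast d = v + (a + -a') • eLast d := by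
        rw [← col_col, ← col_col, he]
      simpa [sub_eq_add_neg] using h2
    obtain ⟨h0, h1⟩ := star_zero_one hv
    obtain ⟨h0', h1'⟩ := star_zero_one hv'
    rw [hv'eq, colSet_shift] at hspec' h0' h1'
    simp only [Set.mem_setOf_eq, zero_add] at h0' h1'
    have hspec'' : ebSpec {k | k + (a - a') ∈ colSet A v} (a - (a - a')) := by
      rw [show a - (a - a') = a' from by ring]
      exact hspec'
    have hr : a - a' = 0 := ebSpec_unique h1 h0 h1' h0' hspec hspec''
    rw [hv'eq, hr]
    simp
  calc (extBdryStar A).ncard = (fmap A '' extBdryStar A).ncard :=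
        (Set.ncard_image_of_injOn hinj).symm
    _ ≤ (extBdryPlus A).ncard :=
        Set.ncard_le_ncard hmaps.image_subset (extBdryPlus_finite hfin)
end

section
/- There exists a constant $K$ depending only on $d$ with the following property. For every even integer $C_0 \ge 2$, all integers $r \ge p \ge 2$, every integer $\nu \ge 1$, and every finite non-empty $\mathbb{Z}^{d+1}$-connected set $S \subset \mathbb{Z}^{d+1}$, there exists a $\mathbb{Z}^{d+1}$-connected set $\Lambda \subset \mathbb{Z}^{d+1}$ such that $|\Lambda| \le K\,\big(\tfrac{|S|\,\Delta_p}{\nu\,\Delta_r} + 1\big)\,p^{q}$ and $S_p^{*} \subseteq \bigcup_{(\mathbf{m},u) \in \Lambda} \mathcal{L}_{r,\nu}(\mathbf{m},u)$. -/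
/-- Nearest-neighbor adjacency on `ℤ^d × ℤ` (i.e. `ℤ^{d+1}`): `ℓ^1` distance 1. -/
def NNAdjP {d : ℕ} (x y : (Fin d → ℤ) × ℤ) : Prop :=
  (∑ s, |x.1 s - y.1 s|) + |x.2 - y.2| = 1

/-- The block `B̂_p(i,k)` of spatial side `Δ_p = C₀^{6p}` and temporal side `p^q Δ_p`,
where `q = 2d+1`. -/
def hatB (d C0 p : ℕ) (i : Fin d → ℤ) (k : ℤ) : Set ((Fin d → ℤ) × ℤ) :=
  {z | (∀ s, i s * (C0 : ℤ) ^ (6 * p) ≤ z.1 s ∧ z.1 s < (i s + 1) * (C0 : ℤ) ^ (6 * p)) ∧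
    k * (p : ℤ) ^ (2 * d + 1) * (C0 : ℤ) ^ (6 * p) ≤ z.2 ∧
    z.2 < (k + 1) * (p : ℤ) ^ (2 * d + 1) * (C0 : ℤ) ^ (6 * p)}

/-- `S*_p`: the union of the blocks `B̂_p(i',k)` over pairs `(i',k)` with
`‖i' - j‖_∞ ≤ 4d - 1` for some `(j, k+1) ∈ S`. -/
def SStar (d C0 p : ℕ) (S : Set ((Fin d → ℤ) × ℤ)) : Set ((Fin d → ℤ) × ℤ) :=
  {z | ∃ (i' : Fin d → ℤ) (k : ℤ) (j : Fin d → ℤ),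
    (j, k + 1) ∈ S ∧ (∀ s, |i' s - j s| ≤ 4 * (d : ℤ) - 1) ∧ z ∈ hatB d C0 p i' k}

/-- The cube `ℒ_{r,ν}(m,u)` of side `ν Δ_r` in all `d+1` coordinates. -/
def LBlock (d C0 r ν : ℕ) (m : Fin d → ℤ) (u : ℤ) : Set ((Fin d → ℤ) × ℤ) :=
  {z | (∀ s, (ν : ℤ) * m s * (C0 : ℤ) ^ (6 * r) ≤ z.1 s ∧
      z.1 s < (ν : ℤ) * (m s + 1) * (C0 : ℤ) ^ (6 * r)) ∧
    (ν : ℤ) * u * (C0 : ℤ) ^ (6 * r) ≤ z.2 ∧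
    z.2 < (ν : ℤ) * (u + 1) * (C0 : ℤ) ^ (6 * r)}

/-!
`Λ` is the image, under coordinatewise floor division by `L = ν Δ_r = ℓ Δ_p`
(`ℓ = ν C₀^{6(r-p)}`), of a union of boxes covering `S*_p`, one box per point `w` of `S`.
Boxes of neighbouring points overlap or touch, so the union is connected, and floor division
sends lattice neighbours to equal or neighbouring points. The box of `w` lands in a fixed
`(8d-1)^d × 2p^q` array of cells determined by `⌊w / ℓ⌋`, and a connected set of `N` points
meets at most `3^{d+1} (N / ℓ + 1)` cells of side `ℓ`.
-/

namespace ConnectedIn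

variable {α β : Type*} {adj : α → α → Prop} {A : Set α}

theorem of_forall_reflTransGen (hsymm : ∀ a b, adj a b → adj b a) (x₀ : α)
    (h : ∀ x ∈ A, Relation.ReflTransGen (fun a b => a ∈ A ∧ b ∈ A ∧ adj a b) x x₀) :
    ConnectedIn adj A := by
  intro x hx y hy
  refine (h x hx).trans
    (Relation.ReflTransGen.mono ?_ _ _ (Relation.ReflTransGen.swap _ _ (h y hy)))
  exact fun a b ⟨hb, ha, hba⟩ => ⟨ha, hb, hsymm b a hba⟩

theorem image (hA : ConnectedIn adj A) (f : α → α)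
    (hf : ∀ a ∈ A, ∀ b ∈ A, adj a b → f a = f b ∨ adj (f a) (f b)) :
    ConnectedIn adj (f '' A) := by
  rintro _ ⟨x, hx, rfl⟩ _ ⟨y, hy, rfl⟩
  refine Relation.ReflTransGen.lift' f (fun a b ⟨ha, hb, hab⟩ => ?_) _ _ (hA x hx y hy)
  rcases hf a ha b hb hab with h | h
  · change Relation.ReflTransGen _ (f a) (f b)
    rw [h]
  · exact .single ⟨⟨a, ha, rfl⟩, ⟨b, hb, rfl⟩, h⟩

theorem biUnion {adj' : β → β → Prop} {S : Set β} (hS : ConnectedIn adj' S) (G : β → Set α)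
    (hG : ∀ w ∈ S, ConnectedIn adj (G w))
    (hglue : ∀ w ∈ S, ∀ w' ∈ S, adj' w w' → ∃ x ∈ G w, ∃ y ∈ G w', x = y ∨ adj x y) :
    ConnectedIn adj (⋃ w ∈ S, G w) := by
  set R := fun a b => a ∈ ⋃ w ∈ S, G w ∧ b ∈ ⋃ w ∈ S, G w ∧ adj a b
  have hsub : ∀ w ∈ S, G w ⊆ ⋃ w ∈ S, G w := fun w hw => Set.subset_biUnion_of_mem hw
  have hinner : ∀ w ∈ S, ∀ x ∈ G w, ∀ y ∈ G w, Relation.ReflTransGen R x y := fun w hw x hx y hy =>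
    Relation.ReflTransGen.mono (fun a b ⟨ha, hb, hab⟩ => ⟨hsub w hw ha, hsub w hw hb, hab⟩) _ _
      (hG w hw x hx y hy)
  have hpath : ∀ w ∈ S, ∀ w', Relation.ReflTransGen (fun a b => a ∈ S ∧ b ∈ S ∧ adj' a b) w w' →
      ∀ x ∈ G w, ∀ y ∈ G w', Relation.ReflTransGen R x y := by
    intro w hw w' h
    induction h with
    | refl => exact hinner w hw
    | @tail b c _ hbc ih =>
      intro x hx y hy
      obtain ⟨xb, hxb, yc, hyc, hbridge⟩ := hglue b hbc.1 c hbc.2.1 hbc.2.2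
      have hstep : Relation.ReflTransGen R xb yc := by
        rcases hbridge with rfl | h
        · exact Relation.ReflTransGen.refl
        · exact .single ⟨hsub b hbc.1 hxb, hsub c hbc.2.1 hyc, h⟩
      exact ((ih x hx xb hxb).trans hstep).trans (hinner c hbc.2.1 yc hyc y hy)
  intro x hx y hy
  simp only [Set.mem_iUnion] at hx hy
  obtain ⟨w, hw, hxw⟩ := hx
  obtain ⟨w', hw', hyw'⟩ := hy
  exact hpath w hw w' (hS w hw w' hw') x hxw y hyw'

theorem exists_eq_of_le (hA : ConnectedIn adj A) (f : α → ℤ)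
    (hf : ∀ a b, adj a b → f b ≤ f a + 1) {x y : α} (hx : x ∈ A) (hy : y ∈ A) {t : ℤ}
    (hxt : f x ≤ t) (hty : t ≤ f y) : ∃ z ∈ A, f z = t := by
  induction hA x hx y hy generalizing t with
  | refl => exact ⟨x, hx, le_antisymm hxt hty⟩
  | @tail b c _ hbc ih =>
    rcases le_or_gt t (f b) with htb | hbt
    · exact ih hbc.1 hxt htb
    · exact ⟨c, hbc.2.1, le_antisymm (by linarith [hf b c hbc.2.2]) hty⟩

end ConnectedIn

namespace LatticeCover

open Finset

variable {d : ℕ}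

def l1dist (x y : (Fin d → ℤ) × ℤ) : ℤ := (∑ s, |x.1 s - y.1 s|) + |x.2 - y.2|

theorem nnAdjP_iff (x y : (Fin d → ℤ) × ℤ) : NNAdjP x y ↔ l1dist x y = 1 := Iff.rfl

theorem l1dist_comm (x y : (Fin d → ℤ) × ℤ) : l1dist x y = l1dist y x := by
  simp only [l1dist, abs_sub_comm]

theorem nnAdjP_symm {x y : (Fin d → ℤ) × ℤ} (h : NNAdjP x y) : NNAdjP y x := by
  rwa [nnAdjP_iff, l1dist_comm]

theorem l1dist_triangle (x y z : (Fin d → ℤ) × ℤ) : l1dist x z ≤ l1dist x y + l1dist y z := by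
  have hsum : ∑ s, |x.1 s - z.1 s| ≤ ∑ s, (|x.1 s - y.1 s| + |y.1 s - z.1 s|) :=
    sum_le_sum fun s _ => abs_sub_le _ _ _
  rw [sum_add_distrib] at hsum
  unfold l1dist
  linarith [abs_sub_le x.2 y.2 z.2]

theorem abs_fst_sub_le_l1dist (x y : (Fin d → ℤ) × ℤ) (s : Fin d) :
    |x.1 s - y.1 s| ≤ l1dist x y := by
  have := single_le_sum (f := fun s => |x.1 s - y.1 s|) (fun _ _ => abs_nonneg _) (mem_univ s)
  unfold l1dist
  linarith [abs_nonneg (x.2 - y.2)]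

theorem abs_snd_sub_le_l1dist (x y : (Fin d → ℤ) × ℤ) : |x.2 - y.2| ≤ l1dist x y := by
  unfold l1dist
  linarith [sum_nonneg fun s (_ : s ∈ univ) => abs_nonneg (x.1 s - y.1 s)]

theorem l1dist_self (x : (Fin d → ℤ) × ℤ) : l1dist x x = 0 := by
  simp [l1dist]

theorem l1dist_nonneg (x y : (Fin d → ℤ) × ℤ) : 0 ≤ l1dist x y :=
  add_nonneg (sum_nonneg fun _ _ => abs_nonneg _) (abs_nonneg _)

theorem eq_of_sum_abs_sub_eq_zero {f g : Fin d → ℤ} (h : ∑ s, |f s - g s| = 0) : f = g :=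
  funext fun s => sub_eq_zero.mp <| abs_eq_zero.mp <|
    (sum_eq_zero_iff_of_nonneg fun _ _ => abs_nonneg _).mp h s (mem_univ s)

theorem eq_of_l1dist_eq_zero {x y : (Fin d → ℤ) × ℤ} (h : l1dist x y = 0) : x = y := by
  have h₁ := sum_nonneg fun s (_ : s ∈ univ) => abs_nonneg (x.1 s - y.1 s)
  have h₂ := abs_nonneg (x.2 - y.2)
  rw [l1dist] at h
  exact Prod.ext (eq_of_sum_abs_sub_eq_zero (by linarith))
    (sub_eq_zero.mp (abs_eq_zero.mp (by linarith)))

theorem nnAdjP_cases {x y : (Fin d → ℤ) × ℤ} (h : NNAdjP x y) :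
    (x.1 = y.1 ∧ |x.2 - y.2| = 1) ∨ ((∀ s, |x.1 s - y.1 s| ≤ 1) ∧ x.2 = y.2) := by
  by_cases ht : x.2 = y.2
  · exact .inr ⟨fun s => h ▸ abs_fst_sub_le_l1dist x y s, ht⟩
  have hpos : 0 < |x.2 - y.2| := abs_pos.mpr (sub_ne_zero.mpr ht)
  have hsum : ∑ s, |x.1 s - y.1 s| = 0 := by
    have := sum_nonneg fun s (_ : s ∈ univ) => abs_nonneg (x.1 s - y.1 s)
    rw [nnAdjP_iff, l1dist] at h
    omega
  refine .inl ⟨eq_of_sum_abs_sub_eq_zero hsum, ?_⟩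
  simpa [nnAdjP_iff, l1dist, hsum] using h

def height (z : (Fin d → ℤ) × ℤ) : ℤ := (∑ s, z.1 s) + z.2

theorem height_mono {a z : (Fin d → ℤ) × ℤ} (h : a ≤ z) : height a ≤ height z :=
  add_le_add (sum_le_sum fun s _ => h.1 s) h.2

theorem exists_nnAdjP_height_pred {a b z : (Fin d → ℤ) × ℤ} (hz : z ∈ Set.Icc a b) (hne : z ≠ a) :
    ∃ z' ∈ Set.Icc a b, NNAdjP z z' ∧ height z' + 1 = height z := by
  obtain ⟨⟨haz₁, haz₂⟩, hzb₁, hzb₂⟩ := hz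
  by_cases ht : z.2 = a.2
  · obtain ⟨s, hs⟩ := Function.ne_iff.mp fun h => hne (Prod.ext h ht)
    refine ⟨(z.1 - Pi.single s 1, z.2), ⟨⟨fun t => ?_, haz₂⟩, fun t => ?_, hzb₂⟩, ?_, ?_⟩
    · rcases eq_or_ne t s with rfl | hts
      · simpa using lt_of_le_of_ne (haz₁ t) (Ne.symm hs)
      · simpa [hts] using haz₁ t
    · rcases eq_or_ne t s with rfl | hts
      · simpa using (hzb₁ t).trans' (by omega : z.1 t - 1 ≤ z.1 t)
      · simpa [hts] using hzb₁ t
    · simp [nnAdjP_iff, l1dist, Pi.single_apply, apply_ite]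
    · simp [height, sum_sub_distrib]
      ring
  · refine ⟨(z.1, z.2 - 1), ⟨⟨haz₁, ?_⟩, hzb₁, (by omega : z.2 - 1 ≤ z.2).trans hzb₂⟩, ?_, ?_⟩
    · simpa using lt_of_le_of_ne haz₂ (Ne.symm ht)
    · simp [nnAdjP_iff, l1dist]
    · simp [height]
      ring

theorem connectedIn_Icc (a b : (Fin d → ℤ) × ℤ) : ConnectedIn NNAdjP (Set.Icc a b) := by
  refine ConnectedIn.of_forall_reflTransGen (fun _ _ => nnAdjP_symm) a fun z hz => ?_
  induction hn : (height z - height a).toNat generalizing z with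
  | zero =>
    by_contra hpath
    obtain ⟨z', hz', -, hh⟩ := exists_nnAdjP_height_pred hz fun h => hpath (h ▸ .refl)
    have := height_mono hz'.1
    omega
  | succ n ih =>
    by_cases hza : z = a
    · exact hza ▸ .refl
    obtain ⟨z', hz', hadj, hh⟩ := exists_nnAdjP_height_pred hz hza
    exact .head ⟨hz, hz', hadj⟩ (ih z' hz' (by omega))

theorem ediv_le_ediv_add {a b n L : ℤ} (hL : 0 < L) (h : a ≤ b + n * L) : a / L ≤ b / L + n :=
  Int.add_mul_ediv_right b n hL.ne' ▸ Int.ediv_le_ediv hL h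

theorem abs_ediv_sub_ediv_le {L : ℤ} (hL : 0 < L) (a b : ℤ) : |a / L - b / L| ≤ |a - b| := by
  have hab := ediv_le_ediv_add (a := a) (b := b) (n := |a - b|) hL
    (by nlinarith [le_abs_self (a - b), abs_nonneg (a - b)])
  have hba := ediv_le_ediv_add (a := b) (b := a) (n := |a - b|) hL
    (by nlinarith [neg_abs_le (a - b), abs_nonneg (a - b)])
  exact abs_sub_le_iff.mpr ⟨by linarith, by linarith⟩

theorem abs_ediv_sub_ediv_le_one {a b L : ℤ} (hL : 0 < L) (h : |a - b| ≤ L) :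
    |a / L - b / L| ≤ 1 := by
  obtain ⟨h₁, h₂⟩ := abs_le.mp h
  have hab := ediv_le_ediv_add (n := 1) (a := a) (b := b) hL (by linarith)
  have hba := ediv_le_ediv_add (n := 1) (a := b) (b := a) hL (by linarith)
  exact abs_le.mpr ⟨by linarith, by linarith⟩

def coarsen (L : ℤ) (z : (Fin d → ℤ) × ℤ) : (Fin d → ℤ) × ℤ := (fun s => z.1 s / L, z.2 / L)

theorem l1dist_coarsen_le {L : ℤ} (hL : 0 < L) (x y : (Fin d → ℤ) × ℤ) :
    l1dist (coarsen L x) (coarsen L y) ≤ l1dist x y :=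
  add_le_add (sum_le_sum fun _ _ => abs_ediv_sub_ediv_le hL _ _) (abs_ediv_sub_ediv_le hL _ _)

theorem ConnectedIn.image_coarsen {A : Set ((Fin d → ℤ) × ℤ)} (hA : ConnectedIn NNAdjP A)
    {L : ℤ} (hL : 0 < L) : ConnectedIn NNAdjP (coarsen L '' A) := by
  refine ConnectedIn.image hA _ fun a _ b _ hab => ?_
  have hle : l1dist (coarsen L a) (coarsen L b) ≤ 1 := hab ▸ l1dist_coarsen_le hL a b
  rcases (l1dist_nonneg (coarsen L a) (coarsen L b)).eq_or_lt with h | h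
  · exact .inl (eq_of_l1dist_eq_zero h.symm)
  · exact .inr (le_antisymm hle h)

theorem coarsen_mem_Icc_of_l1dist_le {L : ℤ} (hL : 0 < L) {x z : (Fin d → ℤ) × ℤ}
    (h : l1dist x z ≤ L) : coarsen L z ∈ Set.Icc (coarsen L x - 1) (coarsen L x + 1) := by
  have hcoord : ∀ a b : ℤ, |a - b| ≤ l1dist x z → a / L - 1 ≤ b / L ∧ b / L ≤ a / L + 1 :=
    fun a b hab => by
      have := abs_le.mp (abs_ediv_sub_ediv_le_one hL (hab.trans h))
      constructor <;> linarith
  refine ⟨⟨fun s => ?_, ?_⟩, fun s => ?_, ?_⟩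
  · exact (hcoord _ _ (abs_fst_sub_le_l1dist x z s)).1
  · exact (hcoord _ _ (abs_snd_sub_le_l1dist x z)).1
  · exact (hcoord _ _ (abs_fst_sub_le_l1dist x z s)).2
  · exact (hcoord _ _ (abs_snd_sub_le_l1dist x z)).2

theorem le_card_filter_l1dist_lt {S : Finset ((Fin d → ℤ) × ℤ)}
    (hS : ConnectedIn NNAdjP (S : Set ((Fin d → ℤ) × ℤ))) {x y : (Fin d → ℤ) × ℤ}
    (hx : x ∈ S) (hy : y ∈ S) {ℓ : ℕ} (hxy : ℓ ≤ l1dist x y) :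
    ℓ ≤ #{z ∈ S | l1dist x z < ℓ} := by
  have hrange : range ℓ ⊆ {z ∈ S | l1dist x z < ℓ}.image fun z => (l1dist x z).toNat := by
    intro t ht
    have ht : (t : ℤ) < ℓ := by exact_mod_cast mem_range.mp ht
    obtain ⟨z, hz, hzt⟩ := hS.exists_eq_of_le (l1dist x)
      (fun a b hab => by linarith [l1dist_triangle x a b, (nnAdjP_iff a b).mp hab])
      (mem_coe.mpr hx) (mem_coe.mpr hy) (t := t) (by simp [l1dist_self]) (by omega)
    exact mem_image.mpr ⟨z, mem_filter.mpr ⟨hz, by omega⟩, by simp [hzt]⟩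
  simpa using (card_le_card hrange).trans card_image_le

/-- Either `S` stays in the `3^(d+1)` cells around one of its cells, or, by connectedness, the
`3^(d+1)` cells around every visited cell contain at least `ℓ` points of `S`; a point is counted
for at most `3^(d+1)` visited cells. -/
theorem card_image_coarsen_mul_le {S : Finset ((Fin d → ℤ) × ℤ)}
    (hS : ConnectedIn NNAdjP (S : Set ((Fin d → ℤ) × ℤ))) {ℓ : ℕ} (hℓ : 0 < ℓ) :
    #(S.image (coarsen ℓ)) * ℓ ≤ 3 ^ (d + 1) * (#S + ℓ) := by
  classical
  set ψ := coarsen (d := d) ℓ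
  set nbhd : (Fin d → ℤ) × ℤ → Finset ((Fin d → ℤ) × ℤ) := fun c => Icc (c - 1) (c + 1)
  have hcard : ∀ c, #(nbhd c) = 3 ^ (d + 1) := fun c => by
    have h3 : ∀ t : ℤ, t + 1 + 1 - (t - 1) = 3 := fun t => by ring
    simp [nbhd, card_Icc_prod, Pi.card_Icc, h3, pow_succ]
  have hsymm : ∀ c c', c ∈ nbhd c' ↔ c' ∈ nbhd c := fun c c' => by
    simp only [nbhd, mem_Icc, sub_le_iff_le_add]
    tauto
  have hnear : ∀ x z, l1dist x z ≤ ℓ → ψ z ∈ nbhd (ψ x) := fun x z h =>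
    mem_Icc.mpr (coarsen_mem_Icc_of_l1dist_le (by exact_mod_cast hℓ) h)
  by_cases hfar : ∀ x ∈ S, ∃ y ∈ S, ψ y ∉ nbhd (ψ x)
  · have hmany : ∀ v ∈ S.image ψ, ℓ ≤ #{z ∈ S | ψ z ∈ nbhd v} := by
      intro v hv
      obtain ⟨x, hx, rfl⟩ := mem_image.mp hv
      obtain ⟨y, hy, hxy⟩ := hfar x hx
      have hℓxy : ℓ ≤ l1dist x y := by
        by_contra h
        exact hxy (hnear x y (not_le.mp h).le)
      refine (le_card_filter_l1dist_lt hS hx hy hℓxy).trans (card_le_card ?_)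
      exact monotone_filter_right _ fun z _ hz => hnear x z hz.le
    have hcount : #(S.image ψ) * ℓ ≤ 3 ^ (d + 1) * #S := calc
      #(S.image ψ) * ℓ ≤ ∑ v ∈ S.image ψ, #{z ∈ S | ψ z ∈ nbhd v} := by
        simpa [mul_comm] using card_nsmul_le_sum _ _ ℓ hmany
      _ = ∑ z ∈ S, #{v ∈ S.image ψ | ψ z ∈ nbhd v} :=
        sum_card_bipartiteAbove_eq_sum_card_bipartiteBelow _
      _ ≤ ∑ z ∈ S, #(nbhd (ψ z)) :=
        sum_le_sum fun z _ => card_le_card fun v hv => (hsymm _ _).mp (mem_filter.mp hv).2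
      _ = 3 ^ (d + 1) * #S := by simp [hcard, mul_comm]
    exact hcount.trans (Nat.mul_le_mul_left _ (Nat.le_add_right _ _))
  · push Not at hfar
    obtain ⟨x, -, hx⟩ := hfar
    have hV : #(S.image ψ) ≤ 3 ^ (d + 1) :=
      hcard (ψ x) ▸ card_le_card (image_subset_iff.mpr hx)
    calc #(S.image ψ) * ℓ ≤ 3 ^ (d + 1) * ℓ := Nat.mul_le_mul_right _ hV
      _ ≤ 3 ^ (d + 1) * (#S + ℓ) := Nat.mul_le_mul_left _ (Nat.le_add_left _ _)

/-- The union of the blocks `B̂_p(i', t - 1)` with `‖i' - j‖_∞ ≤ ρ`, for `w = (j, t)`, when the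
blocks have spatial side `Δ` and temporal side `T`. -/
def thickBlock (ρ Δ T : ℤ) (w : (Fin d → ℤ) × ℤ) : Set ((Fin d → ℤ) × ℤ) :=
  Set.Icc ((fun s => (w.1 s - ρ) * Δ), (w.2 - 1) * T)
    ((fun s => (w.1 s + ρ + 1) * Δ - 1), w.2 * T - 1)

def thickUnion (ρ Δ T : ℤ) (S : Set ((Fin d → ℤ) × ℤ)) : Set ((Fin d → ℤ) × ℤ) :=
  ⋃ w ∈ S, thickBlock ρ Δ T w

theorem mem_thickBlock {ρ Δ T : ℤ} {w z : (Fin d → ℤ) × ℤ} :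
    z ∈ thickBlock ρ Δ T w ↔
      (∀ s, (w.1 s - ρ) * Δ ≤ z.1 s ∧ z.1 s ≤ (w.1 s + ρ + 1) * Δ - 1) ∧
        (w.2 - 1) * T ≤ z.2 ∧ z.2 ≤ w.2 * T - 1 := by
  simp only [thickBlock, Set.mem_Icc, Prod.le_def, Pi.le_def, forall_and]
  tauto

theorem SStar_subset_thickUnion (C0 p : ℕ) (S : Set ((Fin d → ℤ) × ℤ)) :
    SStar d C0 p S ⊆ thickUnion (4 * d - 1) (C0 ^ (6 * p)) (p ^ (2 * d + 1) * C0 ^ (6 * p)) S := by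
  rintro z ⟨i', k, j, hjk, hi', ⟨hzs, hzt₁, hzt₂⟩⟩
  refine Set.mem_biUnion hjk (mem_thickBlock.mpr ⟨fun s => ⟨?_, ?_⟩, ?_, ?_⟩) <;> dsimp only
  · obtain ⟨h, -⟩ := abs_le.mp (hi' s)
    exact (Int.mul_le_mul_of_nonneg_right (by linarith) (by positivity)).trans (hzs s).1
  · obtain ⟨-, h⟩ := abs_le.mp (hi' s)
    have := (hzs s).2
    have : (i' s + 1) * (C0 : ℤ) ^ (6 * p) ≤ (j s + (4 * d - 1) + 1) * C0 ^ (6 * p) :=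
      Int.mul_le_mul_of_nonneg_right (by linarith) (by positivity)
    omega
  · simpa [mul_assoc] using hzt₁
  · simp only [mul_assoc] at hzt₂ ⊢
    omega

theorem mul_mem_thickInterval {a b ρ Δ : ℤ} (hΔ : 0 < Δ) (h₁ : b - ρ ≤ a) (h₂ : a ≤ b + ρ) :
    (b - ρ) * Δ ≤ a * Δ ∧ a * Δ ≤ (b + ρ + 1) * Δ - 1 :=
  ⟨by nlinarith, by nlinarith⟩

theorem thickBlock_glue {ρ Δ T : ℤ} (hρ : 1 ≤ ρ) (hΔ : 0 < Δ) (hT : 0 < T)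
    {w w' : (Fin d → ℤ) × ℤ} (h : NNAdjP w w') :
    ∃ x ∈ thickBlock ρ Δ T w, ∃ y ∈ thickBlock ρ Δ T w', x = y ∨ NNAdjP x y := by
  wlog hle : w.2 ≤ w'.2 generalizing w w'
  · obtain ⟨x, hx, y, hy, hxy⟩ := this (nnAdjP_symm h) (le_of_not_ge hle)
    exact ⟨y, hy, x, hx, hxy.imp Eq.symm nnAdjP_symm⟩
  have hstep : ∀ t : ℤ, (t - 1) * T ≤ t * T - 1 := fun t => by nlinarith
  rcases nnAdjP_cases h with ⟨hj, ht⟩ | ⟨hj, ht⟩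
  · have ht : w'.2 = w.2 + 1 := by
      rw [abs_sub_comm, abs_of_nonneg (by linarith)] at ht
      linarith
    have hspace : ∀ s, (w.1 s - ρ) * Δ ≤ w.1 s * Δ ∧ w.1 s * Δ ≤ (w.1 s + ρ + 1) * Δ - 1 :=
      fun s => mul_mem_thickInterval hΔ (by linarith) (by linarith)
    refine ⟨(fun s => w.1 s * Δ, w.2 * T - 1), mem_thickBlock.mpr ⟨hspace, hstep _, le_rfl⟩,
      (fun s => w.1 s * Δ, w.2 * T), mem_thickBlock.mpr ⟨hj ▸ hspace, ?_, ?_⟩, .inr ?_⟩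
    · simp [ht]
    · simpa [ht, add_mul] using hstep (w.2 + 1)
    · simp [nnAdjP_iff, l1dist]
  · refine ⟨(fun s => max (w.1 s) (w'.1 s) * Δ, (w.2 - 1) * T), mem_thickBlock.mpr
      ⟨fun s => mul_mem_thickInterval hΔ ?_ ?_, le_rfl, hstep _⟩, _, mem_thickBlock.mpr
      ⟨fun s => mul_mem_thickInterval hΔ ?_ ?_, ht ▸ le_rfl, ht ▸ hstep _⟩, .inl rfl⟩ <;>
    have := abs_le.mp (hj s) <;> grind

theorem ConnectedIn.thickUnion {S : Set ((Fin d → ℤ) × ℤ)} (hS : ConnectedIn NNAdjP S)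
    {ρ Δ T : ℤ} (hρ : 1 ≤ ρ) (hΔ : 0 < Δ) (hT : 0 < T) :
    ConnectedIn NNAdjP (thickUnion ρ Δ T S) :=
  hS.biUnion _ (fun _ _ => connectedIn_Icc _ _)
    fun _ _ _ _ h => thickBlock_glue hρ hΔ hT h

theorem coarsen_mem_Icc_of_mem_thickBlock {ρ Δ Q ℓ : ℤ} (hΔ : 0 < Δ) (hℓ : 0 < ℓ)
    {w z : (Fin d → ℤ) × ℤ} (hz : z ∈ thickBlock ρ Δ (Q * Δ) w) :
    coarsen (ℓ * Δ) z ∈ Set.Icc ((fun s => (coarsen ℓ w).1 s - ρ), ((coarsen ℓ w).2 - 1) * Q)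
      ((fun s => (coarsen ℓ w).1 s + ρ), ((coarsen ℓ w).2 + 1) * Q - 1) := by
  obtain ⟨hzs, hzt₁, hzt₂⟩ := mem_thickBlock.mp hz
  have hL : 0 < ℓ * Δ := mul_pos hℓ hΔ
  have hlo : ∀ a, a / ℓ * ℓ ≤ a := fun a => Int.ediv_mul_le a hℓ.ne'
  have hhi : ∀ a, a < (a / ℓ + 1) * ℓ := fun a => Int.lt_ediv_add_one_mul_self a hℓ
  -- the block is nonempty, which forces `0 ≤ ρ` and `0 ≤ Q * Δ`
  have hρℓ : ∀ s : Fin d, ρ * Δ ≤ ρ * (ℓ * Δ) := fun s => by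
    have : 0 ≤ ρ := by nlinarith [(hzs s).1.trans (hzs s).2]
    nlinarith [mul_nonneg this hΔ.le]
  have hQΔ : 0 ≤ Q * Δ := by linarith
  refine ⟨⟨fun s => ?_, ?_⟩, fun s => ?_, ?_⟩ <;> dsimp only [coarsen]
  · refine (Int.le_ediv_iff_mul_le hL).mpr ((?_ : _ ≤ (w.1 s - ρ) * Δ).trans (hzs s).1)
    nlinarith [mul_le_mul_of_nonneg_right (hlo (w.1 s)) hΔ.le, hρℓ s]
  · refine (Int.le_ediv_iff_mul_le hL).mpr ((?_ : _ ≤ (w.2 - 1) * (Q * Δ)).trans hzt₁)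
    nlinarith [hlo w.2]
  · refine Int.lt_add_one_iff.mp ((Int.ediv_lt_iff_lt_mul hL).mpr ?_)
    nlinarith [mul_le_mul_of_nonneg_right (hhi (w.1 s)) hΔ.le, (hzs s).2, hρℓ s]
  · refine Int.le_sub_one_iff.mpr ((Int.ediv_lt_iff_lt_mul hL).mpr ?_)
    nlinarith [hhi w.2]

theorem ncard_coarsen_image_thickUnion_le_card_mul (S : Finset ((Fin d → ℤ) × ℤ))
    {ρ Δ Q ℓ : ℤ} (hΔ : 0 < Δ) (hℓ : 0 < ℓ) :
    (coarsen (ℓ * Δ) '' thickUnion ρ Δ (Q * Δ) (S : Set ((Fin d → ℤ) × ℤ))).ncard ≤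
      #(S.image (coarsen ℓ)) * ((2 * ρ + 1).toNat ^ d * (2 * Q).toNat) := by
  classical
  set box : (Fin d → ℤ) × ℤ → Finset ((Fin d → ℤ) × ℤ) := fun c =>
    Icc ((fun s => c.1 s - ρ), (c.2 - 1) * Q) ((fun s => c.1 s + ρ), (c.2 + 1) * Q - 1)
  have hcard : ∀ c, #(box c) = (2 * ρ + 1).toNat ^ d * (2 * Q).toNat := fun c => by
    have hs : ∀ s, c.1 s + ρ + 1 - (c.1 s - ρ) = 2 * ρ + 1 := fun s => by ring
    have ht : (c.2 + 1) * Q - (c.2 - 1) * Q = 2 * Q := by ring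
    simp [box, card_Icc_prod, Pi.card_Icc, hs, ht]
  have hsub : coarsen (ℓ * Δ) '' thickUnion ρ Δ (Q * Δ) (S : Set ((Fin d → ℤ) × ℤ)) ⊆
      ↑((S.image (coarsen ℓ)).biUnion box) := by
    rintro _ ⟨z, hz, rfl⟩
    obtain ⟨w, hw, hzw⟩ := Set.mem_iUnion₂.mp hz
    simp only [coe_biUnion, coe_image, Set.mem_iUnion, Set.mem_image]
    exact ⟨_, ⟨w, hw, rfl⟩, by simpa [box] using coarsen_mem_Icc_of_mem_thickBlock hΔ hℓ hzw⟩
  calc _ ≤ #((S.image (coarsen ℓ)).biUnion box) := by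
        rw [← Set.ncard_coe_finset]
        exact Set.ncard_le_ncard hsub (finite_toSet _)
    _ ≤ ∑ c ∈ S.image (coarsen ℓ), #(box c) := card_biUnion_le
    _ = _ := by simp [hcard]

theorem mem_LBlock_coarsen {C0 r ν : ℕ} (hν : 0 < ν) (hC0 : 0 < C0) (z : (Fin d → ℤ) × ℤ) :
    z ∈ LBlock d C0 r ν (coarsen (ν * C0 ^ (6 * r)) z).1 (coarsen (ν * C0 ^ (6 * r)) z).2 := by
  have hL : (0 : ℤ) < ν * C0 ^ (6 * r) := by positivity
  have key : ∀ a : ℤ, (ν : ℤ) * (a / (ν * C0 ^ (6 * r))) * C0 ^ (6 * r) ≤ a ∧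
      a < ν * (a / (ν * C0 ^ (6 * r)) + 1) * C0 ^ (6 * r) := fun a => by
    constructor
    · linarith [Int.ediv_mul_le a hL.ne']
    · linarith [Int.lt_ediv_add_one_mul_self a hL]
  exact ⟨fun s => key (z.1 s), key z.2⟩

theorem ncard_coarsen_image_thickUnion_le {S : Finset ((Fin d → ℤ) × ℤ)}
    (hS : ConnectedIn NNAdjP (S : Set ((Fin d → ℤ) × ℤ))) {ρ Δ Q : ℤ} (hρ : 0 ≤ ρ) (hΔ : 0 < Δ)
    (hQ : 0 ≤ Q) {ℓ : ℕ} (hℓ : 0 < ℓ) :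
    ((coarsen (ℓ * Δ) '' thickUnion ρ Δ (Q * Δ) (S : Set ((Fin d → ℤ) × ℤ))).ncard : ℝ) ≤
      3 ^ (d + 1) * (#S / ℓ + 1) * ((2 * ρ + 1) ^ d * (2 * Q)) := by
  have hcells : (#(S.image (coarsen ℓ)) : ℝ) ≤ 3 ^ (d + 1) * (#S / ℓ + 1) := by
    have hℓ' : (0 : ℝ) < ℓ := by exact_mod_cast hℓ
    rw [div_add_one hℓ'.ne', mul_div_assoc', le_div_iff₀ hℓ']
    exact_mod_cast card_image_coarsen_mul_le hS hℓ
  have hcast : ∀ a : ℤ, 0 ≤ a → ((a.toNat : ℕ) : ℝ) = a := fun a ha => by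
    rw [← Int.cast_natCast, Int.toNat_of_nonneg ha]
  calc _ ≤ ((#(S.image (coarsen ℓ)) * ((2 * ρ + 1).toNat ^ d * (2 * Q).toNat) : ℕ) : ℝ) := by
        exact_mod_cast ncard_coarsen_image_thickUnion_le_card_mul S hΔ (by exact_mod_cast hℓ)
    _ ≤ _ := by
        push_cast [hcast _ (by omega : 0 ≤ 2 * ρ + 1), hcast _ (by omega : 0 ≤ 2 * Q)]
        gcongr

end LatticeCover

open LatticeCover

/-- Lemma 11: there is a constant `K = K(d)` such that for every even
`C₀ ≥ 2`, all `r ≥ p ≥ 2`, every `ν ≥ 1` and every finite nonempty `ℤ^{d+1}`-connected set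
`S`, there is a `ℤ^{d+1}`-connected set `Λ` with
`|Λ| ≤ K (|S| Δ_p / (ν Δ_r) + 1) p^q` whose cubes `ℒ_{r,ν}` cover `S*_p`. -/
theorem cover_SStar_by_LBlocks (d : ℕ) (hd : 1 ≤ d) :
    ∃ K : ℝ, 0 < K ∧
      ∀ C0 : ℕ, Even C0 → 2 ≤ C0 →
      ∀ p r : ℕ, 2 ≤ p → p ≤ r →
      ∀ ν : ℕ, 1 ≤ ν →
      ∀ S : Set ((Fin d → ℤ) × ℤ), S.Finite → S.Nonempty → ConnectedIn NNAdjP S →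
      ∃ Λ : Set ((Fin d → ℤ) × ℤ), Λ.Finite ∧ ConnectedIn NNAdjP Λ ∧
        (Λ.ncard : ℝ) ≤
          K * ((S.ncard : ℝ) * (C0 : ℝ) ^ (6 * p) / ((ν : ℝ) * (C0 : ℝ) ^ (6 * r)) + 1) *
            (p : ℝ) ^ (2 * d + 1) ∧
        SStar d C0 p S ⊆ ⋃ mu ∈ Λ, LBlock d C0 r ν mu.1 mu.2 := by
  classical
  have hd' : (1 : ℝ) ≤ d := by exact_mod_cast hd
  refine ⟨2 * 3 ^ (d + 1) * (8 * d - 1) ^ d, mul_pos (by positivity) (pow_pos (by linarith) d), ?_⟩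
  intro C0 _ hC0 p r hp hpr ν hν S hSfin _ hS
  obtain ⟨S, rfl⟩ := hSfin.exists_finset_coe
  set ℓ : ℕ := ν * C0 ^ (6 * (r - p))
  have hL : ν * C0 ^ (6 * r) = ℓ * C0 ^ (6 * p) := by
    rw [show 6 * r = 6 * (r - p) + 6 * p by omega, pow_add, ← mul_assoc]
  have hLZ : (ν : ℤ) * C0 ^ (6 * r) = ℓ * (C0 : ℤ) ^ (6 * p) := by exact_mod_cast hL
  set U := thickUnion (4 * d - 1) (C0 ^ (6 * p)) (p ^ (2 * d + 1) * C0 ^ (6 * p))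
    (S : Set ((Fin d → ℤ) × ℤ))
  refine ⟨coarsen (ν * C0 ^ (6 * r)) '' U,
    (S.finite_toSet.biUnion fun _ _ => Set.finite_Icc _ _).image _, ?_, ?_, fun z hz => ?_⟩
  · rw [hLZ]
    exact (hS.thickUnion (by omega) (by positivity) (by positivity)).image_coarsen
      (by positivity)
  · have hratio : ((S : Set ((Fin d → ℤ) × ℤ)).ncard : ℝ) * C0 ^ (6 * p) / (ν * C0 ^ (6 * r)) =
        S.card / ℓ := by
      have hL' : (ν : ℝ) * C0 ^ (6 * r) = ℓ * C0 ^ (6 * p) := by exact_mod_cast hL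
      rw [Set.ncard_coe_finset, hL', mul_div_mul_right _ _ (by positivity)]
    rw [hLZ, hratio]
    calc _ ≤ _ := ncard_coarsen_image_thickUnion_le hS (by omega) (by positivity) (by positivity)
          (by positivity)
      _ = _ := by push_cast; ring
  · obtain ⟨w, hw, hzw⟩ := Set.mem_iUnion₂.mp (SStar_subset_thickUnion C0 p _ hz)
    exact Set.mem_biUnion (Set.mem_image_of_mem _ (Set.mem_biUnion hw hzw))
      (mem_LBlock_coarsen (by omega) (by omega) z)
end

section
/- Let $X$ be a Poisson random variable with mean $\mu$, where $0 < \mu \le 1$, and let $y$ be a real number with $y \ge 2e\mu$. Then $P\{X \ge y\} \le \exp\big[-\tfrac{y}{2}\,\log\tfrac{y}{2}\big]$. -/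
open scoped Nat

lemma poisson_tsum_exp (μ : ℝ) : ∑' n : ℕ, μ ^ n / n ! = Real.exp μ := by
  rw [Real.exp_eq_exp_ℝ, NormedSpace.exp_eq_tsum_div]

lemma poisson_tail_le_term (μ y : ℝ) (hμ0 : 0 < μ) :
    (∑' k : ℕ, if y ≤ (k : ℝ) then Real.exp (-μ) * μ ^ k / (k)! else 0) ≤
      μ ^ ⌈y⌉₊ / (⌈y⌉₊)! := by
  set n := ⌈y⌉₊ with hn
  set F : ℕ → ℝ := fun k => if y ≤ (k : ℝ) then Real.exp (-μ) * μ ^ k / (k)! else 0 with hF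
  have hFnonneg : ∀ k, 0 ≤ F k := by
    intro k; simp only [hF]; split <;> positivity
  have hFle : ∀ k, F k ≤ Real.exp (-μ) * (μ ^ k / (k)!) := by
    intro k; simp only [hF]; split
    · rw [mul_div_assoc]
    · positivity
  have hsum : Summable F :=
    Summable.of_nonneg_of_le hFnonneg hFle
      ((Real.summable_pow_div_factorial μ).mul_left _)
  have hsplit := Summable.sum_add_tsum_nat_add (f := F) n hsum
  have hzero : ∀ i ∈ Finset.range n, F i = 0 := by
    intro i hi
    have hi' : (i : ℝ) < y := Nat.lt_ceil.mp (Finset.mem_range.mp hi)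
    simp only [hF]; rw [if_neg (not_le.mpr hi')]
  have hfirst : ∑ i ∈ Finset.range n, F i = 0 := Finset.sum_eq_zero hzero
  have hshift : Summable fun i => F (i + n) := (summable_nat_add_iff n).mpr hsum
  have hterm : ∀ i : ℕ, F (i + n) ≤ (Real.exp (-μ) * μ ^ n / n !) * (μ ^ i / i !) := by
    intro i
    simp only [hF]
    split
    · have h : ((n ! * i ! : ℕ) : ℝ) ≤ (((n + i)!) : ℕ) := by
        exact_mod_cast Nat.le_of_dvd (n + i).factorial_pos
          (Nat.factorial_mul_factorial_dvd_factorial_add n i)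
      have hcomm : i + n = n + i := Nat.add_comm i n
      rw [hcomm]
      calc Real.exp (-μ) * μ ^ (n + i) / ((n + i)! : ℕ)
          ≤ Real.exp (-μ) * μ ^ (n + i) / ((n ! * i ! : ℕ) : ℝ) := by gcongr
        _ = Real.exp (-μ) * μ ^ n / n ! * (μ ^ i / i !) := by
            push_cast; rw [pow_add]; ring
    · positivity
  have hsum2 : Summable fun i : ℕ => (Real.exp (-μ) * μ ^ n / n !) * (μ ^ i / i !) :=
    (Real.summable_pow_div_factorial μ).mul_left _
  have hle : (∑' i : ℕ, F (i + n)) ≤ ∑' i : ℕ, (Real.exp (-μ) * μ ^ n / n !) * (μ ^ i / i !) :=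
    Summable.tsum_le_tsum hterm hshift hsum2
  have hval : (∑' i : ℕ, (Real.exp (-μ) * μ ^ n / n !) * (μ ^ i / i !)) = μ ^ n / n ! := by
    rw [tsum_mul_left, poisson_tsum_exp]
    have h1 : Real.exp (-μ) * Real.exp μ = 1 := by rw [← Real.exp_add]; simp
    calc Real.exp (-μ) * μ ^ n / ↑n ! * Real.exp μ
        = (Real.exp (-μ) * Real.exp μ) * (μ ^ n / ↑n !) := by ring
      _ = μ ^ n / ↑n ! := by rw [h1, one_mul]
  calc (∑' k : ℕ, F k) = ∑ i ∈ Finset.range n, F i + ∑' i : ℕ, F (i + n) := hsplit.symm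
    _ = ∑' i : ℕ, F (i + n) := by rw [hfirst, zero_add]
    _ ≤ ∑' i : ℕ, (Real.exp (-μ) * μ ^ n / n !) * (μ ^ i / i !) := hle
    _ = μ ^ n / n ! := hval

/-- display (4.55zy): for a Poisson variable `X` of mean `μ ∈ (0,1]` and
`y ≥ 2eμ`, the tail `P{X ≥ y} = ∑_{k ≥ y} e^{-μ} μ^k / k!` is at most
`exp(-(y/2) log(y/2))`. -/
theorem poisson_tail_bound (μ y : ℝ) (hμ0 : 0 < μ) (hμ1 : μ ≤ 1)
    (hy : 2 * Real.exp 1 * μ ≤ y) :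
    (∑' k : ℕ, if y ≤ (k : ℝ) then Real.exp (-μ) * μ ^ k / (k)! else 0) ≤
      Real.exp (-(y / 2) * Real.log (y / 2)) := by
  have he := Real.exp_one_gt_d9
  have he' := Real.exp_one_lt_d9
  have hy0 : 0 < y := lt_of_lt_of_le (by positivity) hy
  have key := poisson_tail_le_term μ y hμ0
  set n := ⌈y⌉₊ with hn
  have hny : y ≤ (n : ℝ) := Nat.le_ceil y
  rcases le_or_gt y 2 with h2 | h2
  · -- y ≤ 2 : tail ≤ 1 ≤ RHS
    have hL : μ ^ n / (n : ℕ)! ≤ 1 := by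
      apply div_le_one_of_le₀
      · calc μ ^ n ≤ 1 := pow_le_one₀ hμ0.le hμ1
          _ ≤ ((n : ℕ)! : ℝ) := by exact_mod_cast Nat.one_le_iff_ne_zero.mpr (Nat.factorial_pos n).ne'
      · positivity
    have hR : (1 : ℝ) ≤ Real.exp (-(y / 2) * Real.log (y / 2)) := by
      apply Real.one_le_exp
      have hlog : Real.log (y / 2) ≤ 0 := Real.log_nonpos (by positivity) (by linarith)
      nlinarith
    linarith
  rcases le_or_gt y 4 with h4 | h4
  · -- 2 < y ≤ 4
    have hn3 : 3 ≤ n := Nat.lt_ceil.mpr (by exact_mod_cast h2)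
    have hμe : μ ≤ 2 / Real.exp 1 := by
      rw [le_div_iff₀ (Real.exp_pos 1)]
      nlinarith [Real.exp_pos 1]
    have h1 : μ ^ n ≤ μ ^ 3 := pow_le_pow_of_le_one hμ0.le hμ1 hn3
    have h2' : μ ^ 3 ≤ (2 / Real.exp 1) ^ 3 := by
      gcongr

    have h3 : (6 : ℝ) ≤ ((n : ℕ)! : ℝ) := by
      exact_mod_cast Nat.factorial_le hn3
    have hL : μ ^ n / ((n : ℕ)! : ℝ) ≤ (2 / Real.exp 1) ^ 3 / 6 := by
      apply div_le_div₀ (by positivity) (le_trans h1 h2') (by norm_num) h3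
    have hL2 : (2 / Real.exp 1) ^ 3 / 6 ≤ 1 / 4 := by
      have h27 : (2.7 : ℝ) ^ 3 < (Real.exp 1) ^ 3 :=
        pow_lt_pow_left₀ (by linarith) (by norm_num) (by norm_num)
      rw [div_pow, div_div, div_le_div_iff₀ (by positivity) (by norm_num)]
      nlinarith [h27]
    have hR : (1 : ℝ) / 4 ≤ Real.exp (-(y / 2) * Real.log (y / 2)) := by
      have hlog2 : Real.log (y / 2) ≤ Real.log 2 :=
        Real.log_le_log (by positivity) (by linarith)
      have hlognn : 0 ≤ Real.log (y / 2) :=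
        Real.log_nonneg (by linarith)
      have hyle : y / 2 ≤ 2 := by linarith
      have hmul : (y / 2) * Real.log (y / 2) ≤ 2 * Real.log 2 :=
        mul_le_mul hyle hlog2 hlognn (by norm_num)
      have heq : Real.exp (-(2 * Real.log 2)) = 1 / 4 := by
        rw [show (2 : ℝ) * Real.log 2 = Real.log (2 ^ (2:ℕ)) by rw [Real.log_pow]; push_cast; ring]
        rw [Real.exp_neg, Real.exp_log (by norm_num)]
        norm_num
      calc (1:ℝ)/4 = Real.exp (-(2 * Real.log 2)) := heq.symm
        _ ≤ Real.exp (-(y / 2) * Real.log (y / 2)) := by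
            apply Real.exp_le_exp.mpr; nlinarith
    linarith
  · -- 4 < y
    have hn4 : (4 : ℝ) < (n : ℝ) := lt_of_lt_of_le h4 hny
    have hn0 : 0 < (n : ℝ) := by linarith
    have hfac : ((n : ℕ)! : ℝ) ≠ 0 := by positivity
    -- n^n ≤ n! * exp n
    have hstir : ((n : ℝ)) ^ n ≤ ((n : ℕ)! : ℝ) * Real.exp n := by
      have hterm : ((n : ℝ)) ^ n / ((n : ℕ)! : ℝ) ≤ Real.exp n := by
        rw [← poisson_tsum_exp (n : ℝ)]
        exact Summable.le_tsum (Real.summable_pow_div_factorial (n : ℝ)) n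
          (fun j _ => by positivity)
      rw [div_le_iff₀ (by positivity)] at hterm
      linarith [hterm]
    have hL1 : μ ^ n / ((n : ℕ)! : ℝ) ≤ 1 / ((n : ℕ)! : ℝ) := by
      apply div_le_div_of_nonneg_right ?_ (by positivity)
      · exact pow_le_one₀ hμ0.le hμ1
    have hL2 : (1 : ℝ) / ((n : ℕ)! : ℝ) ≤ Real.exp ((n : ℝ) - (n : ℝ) * Real.log n) := by
      have hpow : ((n : ℝ)) ^ n = Real.exp ((n : ℝ) * Real.log n) := by
        rw [mul_comm, Real.exp_mul, Real.exp_log hn0]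
        rw [← Real.rpow_natCast]
      rw [Real.exp_sub, ← hpow, div_le_div_iff₀ (by positivity) (by positivity)]
      nlinarith [Real.exp_pos (n : ℝ), (Nat.factorial_pos n)]
    have hexp : Real.exp ((n : ℝ) - (n : ℝ) * Real.log n) ≤
        Real.exp (-(y / 2) * Real.log (y / 2)) := by
      apply Real.exp_le_exp.mpr
      have hlogy : Real.log y ≤ Real.log n := Real.log_le_log hy0 hny
      have hlogy1 : 1 < Real.log y := by
        rw [show (1:ℝ) = Real.log (Real.exp 1) by rw [Real.log_exp]]
        apply Real.log_lt_log (Real.exp_pos 1)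
        linarith
      have hlog4 : Real.log 4 ≤ Real.log y := Real.log_le_log (by norm_num) h4.le
      have hlog42 : Real.log 4 = 2 * Real.log 2 := by
        rw [show (4:ℝ) = 2 ^ (2:ℕ) by norm_num, Real.log_pow]; push_cast; ring
      have hlog2 := Real.log_two_gt_d9
      have hlogyy : 2 ≤ Real.log 2 + Real.log y := by
        rw [hlog42] at hlog4; linarith
      have hlogdiv : Real.log (y / 2) = Real.log y - Real.log 2 :=
        Real.log_div (by positivity) (by norm_num)
      have step1 : (n : ℝ) * (1 - Real.log n) ≤ y * (1 - Real.log n) := by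
        apply mul_le_mul_of_nonpos_right hny
        nlinarith
      have step2 : y * (1 - Real.log n) ≤ y * (1 - Real.log y) := by
        apply mul_le_mul_of_nonneg_left _ hy0.le
        linarith
      have step3 : y * (1 - Real.log y) ≤ -(y / 2) * Real.log (y / 2) := by
        rw [hlogdiv]
        nlinarith [mul_nonneg hy0.le (sub_nonneg.mpr hlogyy)]
      have hring : (n : ℝ) - (n : ℝ) * Real.log n = (n : ℝ) * (1 - Real.log n) := by ring
      linarith [step1, step2, step3]
    calc (∑' k : ℕ, if y ≤ (k : ℝ) then Real.exp (-μ) * μ ^ k / (k)! else 0)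
        ≤ μ ^ n / ((n : ℕ)! : ℝ) := key
      _ ≤ 1 / ((n : ℕ)! : ℝ) := hL1
      _ ≤ Real.exp ((n : ℝ) - (n : ℝ) * Real.log n) := hL2
      _ ≤ Real.exp (-(y / 2) * Real.log (y / 2)) := hexp
end
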